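/- For every n ≥ 2, the number of independent sets S of the para-chain square cactus Q_n whose set of vertices not dominated by S is exactly {x_n} equals the number of independent dominating sets of Q_{n-1} that contain the end cut vertex x_{n-1}. (Equivalently, any such set S must contain x_{n-1}.) -/

import Mathlib

/-- `S` is an independent dominating set of `G`: pairwise non-adjacent, and every
vertex outside `S` has a neighbour in `S`. -/
def IsIndepDomSet {V : Type*} (G : SimpleGraph V) (S : Finset V) : Prop :=
  (∀ v ∈ S, ∀ w ∈ S, ¬ G.Adj v w) ∧ ∀ v, v ∉ S → ∃ w ∈ S, G.Adj v w

/-- The para-chain square cactus `Q n`: `Sum.inl i` is the cut vertex `x i`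
(`0 ≤ i ≤ n`), `Sum.inr (Sum.inl k)` is `u (k+1)` and `Sum.inr (Sum.inr k)` is
`w (k+1)` (`0 ≤ k ≤ n-1`); the `i`-th square (`1 ≤ i ≤ n`) is the four-cycle
`x (i-1) – u i – x i – w i – x (i-1)`. -/
def paraSq (n : ℕ) : SimpleGraph (Fin (n + 1) ⊕ (Fin n ⊕ Fin n)) :=
  SimpleGraph.fromRel fun p q =>
    match p, q with
    | Sum.inl i, Sum.inr (Sum.inl k) => (i : ℕ) = (k : ℕ) ∨ (i : ℕ) = (k : ℕ) + 1
    | Sum.inl i, Sum.inr (Sum.inr k) => (i : ℕ) = (k : ℕ) ∨ (i : ℕ) = (k : ℕ) + 1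
    | _, _ => False

/-- The number of independent dominating sets of the para-chain square cactus `Q n`. -/
noncomputable def numIDSParaSq (n : ℕ) : ℕ :=
  Nat.card {S : Finset (Fin (n + 1) ⊕ (Fin n ⊕ Fin n)) // IsIndepDomSet (paraSq n) S}

/-!
`Q (n+1)` is `Q n` with one more square `x n – u – x (n+1) – w` attached at `x n`. An independent
set `S` of `Q (n+1)` leaving exactly `x (n+1)` undominated avoids `x (n+1)` and its neighbours
`u`, `w`, so it lies in `Q n`, where domination is unchanged; and `u` must be dominated, which
forces `x n ∈ S`. Conversely, an independent dominating set of `Q n` containing `x n` dominates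
`u` and `w` in `Q (n+1)` but not `x (n+1)`. So pushing sets forward along `Q n ↪ Q (n+1)` is the
required bijection.
-/

open Function SimpleGraph

lemma Nat.card_subtype_eq_of_injective {α β : Type*} {g : α → β} (hg : Injective g)
    {P : β → Prop} (hP : ∀ b, P b → ∃ a, g a = b) :
    Nat.card {b // P b} = Nat.card {a // P (g a)} :=
  Nat.card_congr (Equiv.ofBijective (fun a => ⟨g a.1, a.2⟩)
    ⟨fun _ _ h => Subtype.ext (hg (congrArg Subtype.val h)),
      fun ⟨b, hb⟩ => let ⟨a, ha⟩ := hP b hb; ⟨⟨a, ha ▸ hb⟩, Subtype.ext ha⟩⟩).symm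

section Domination

variable {V W : Type*} {G : SimpleGraph V} {G' : SimpleGraph W}

def IsDominatedBy (G : SimpleGraph V) (S : Finset V) (v : V) : Prop :=
  v ∈ S ∨ ∃ w ∈ S, G.Adj v w

-- The undominated vertices are spelled out rather than written `¬ IsDominatedBy G S v`, so that
-- this is the predicate of the main theorem up to definitional unfolding.
def IsIndepDomSetExcept (G : SimpleGraph V) (S : Finset V) (z : V) : Prop :=
  (∀ v ∈ S, ∀ w ∈ S, ¬ G.Adj v w) ∧ ∀ v, (v ∉ S ∧ ∀ w ∈ S, ¬ G.Adj v w) ↔ v = z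

lemma not_isDominatedBy_iff {S : Finset V} {v : V} :
    ¬ IsDominatedBy G S v ↔ v ∉ S ∧ ∀ w ∈ S, ¬ G.Adj v w := by
  simp [IsDominatedBy]

lemma isIndepDomSet_iff {S : Finset V} :
    IsIndepDomSet G S ↔ (∀ v ∈ S, ∀ w ∈ S, ¬ G.Adj v w) ∧ ∀ v, IsDominatedBy G S v := by
  simp only [IsIndepDomSet, IsDominatedBy, or_iff_not_imp_left]

lemma SimpleGraph.Embedding.forall_mem_map_not_adj_iff (f : G ↪g G') (T : Finset V) :
    (∀ v ∈ T.map f.toEmbedding, ∀ w ∈ T.map f.toEmbedding, ¬ G'.Adj v w) ↔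
      ∀ v ∈ T, ∀ w ∈ T, ¬ G.Adj v w := by
  simp

lemma SimpleGraph.Embedding.isDominatedBy_map_iff (f : G ↪g G') (T : Finset V) (v : V) :
    IsDominatedBy G' (T.map f.toEmbedding) (f v) ↔ IsDominatedBy G T v := by
  simp [IsDominatedBy]

end Domination

section ParaSq

variable {n : ℕ}

@[simp]
lemma paraSq_not_adj_inl_inl (i j : Fin (n + 1)) : ¬ (paraSq n).Adj (.inl i) (.inl j) := by
  simp [paraSq]

@[simp]
lemma paraSq_not_adj_inr_inr (s t : Fin n ⊕ Fin n) : ¬ (paraSq n).Adj (.inr s) (.inr t) := by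
  simp [paraSq]

lemma paraSq_adj_inr_iff (s : Fin n ⊕ Fin n) (v : Fin (n + 1) ⊕ (Fin n ⊕ Fin n)) :
    (paraSq n).Adj (.inr s) v ↔
      v = .inl (s.elim id id).castSucc ∨ v = .inl (s.elim id id).succ := by
  rcases v with i | t
  · rcases s with k | k <;> simp [paraSq, Fin.ext_iff]
  · simp

def paraSqEmbedding (n : ℕ) : paraSq n ↪g paraSq (n + 1) where
  toEmbedding := .sumMap Fin.castSuccEmb (.sumMap Fin.castSuccEmb Fin.castSuccEmb)
  map_rel_iff' {p q} := by
    rcases p with i | k | k <;> rcases q with j | l | l <;>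
      simp [paraSq, Fin.ext_iff]

lemma paraSqEmbedding_ne_inl_last (p : Fin (n + 1) ⊕ (Fin n ⊕ Fin n)) :
    paraSqEmbedding n p ≠ .inl (Fin.last (n + 1)) := by
  rcases p with i | k | k <;> simp [paraSqEmbedding, Fin.ext_iff]
  omega

lemma paraSqEmbedding_ne_inr_last (p : Fin (n + 1) ⊕ (Fin n ⊕ Fin n))
    {s : Fin (n + 1) ⊕ Fin (n + 1)} (hs : s.elim id id = Fin.last n) :
    paraSqEmbedding n p ≠ .inr s := by
  rcases s with k | k <;> rcases p with i | l | l <;>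
    simp_all [paraSqEmbedding, Fin.ext_iff] <;> omega

lemma forall_paraSq_succ {P : Fin (n + 2) ⊕ (Fin (n + 1) ⊕ Fin (n + 1)) → Prop} :
    (∀ v, P v) ↔ P (.inl (Fin.last (n + 1))) ∧ P (.inr (.inl (Fin.last n))) ∧
      P (.inr (.inr (Fin.last n))) ∧ ∀ p, P (paraSqEmbedding n p) := by
  refine ⟨fun h => ⟨h _, h _, h _, fun _ => h _⟩, fun ⟨hx, hu, hw, hf⟩ v => ?_⟩
  rcases v with i | k | k
  · exact Fin.lastCases hx (fun i => hf (.inl i)) i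
  · exact Fin.lastCases hu (fun k => hf (.inr (.inl k))) k
  · exact Fin.lastCases hw (fun k => hf (.inr (.inr k))) k

lemma paraSq_adj_inl_last_iff (v : Fin (n + 2) ⊕ (Fin (n + 1) ⊕ Fin (n + 1))) :
    (paraSq (n + 1)).Adj (.inl (Fin.last (n + 1))) v ↔
      v = .inr (.inl (Fin.last n)) ∨ v = .inr (.inr (Fin.last n)) := by
  rcases v with i | s
  · simp
  · rw [adj_comm, paraSq_adj_inr_iff]
    rcases s with k | k <;> simp [Fin.ext_iff] <;> omega

variable (T : Finset (Fin (n + 1) ⊕ (Fin n ⊕ Fin n)))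

lemma not_isDominatedBy_map_inl_last :
    ¬ IsDominatedBy (paraSq (n + 1)) (T.map (paraSqEmbedding n).toEmbedding)
      (.inl (Fin.last (n + 1))) := by
  rw [not_isDominatedBy_iff, Finset.forall_mem_map]
  refine ⟨fun h => ?_, fun p _ hadj => ?_⟩
  · obtain ⟨p, -, hp⟩ := Finset.mem_map.1 h
    exact paraSqEmbedding_ne_inl_last p hp
  · rcases (paraSq_adj_inl_last_iff _).1 hadj with h | h <;>
      exact paraSqEmbedding_ne_inr_last p rfl h

lemma isDominatedBy_map_inr_last_iff {s : Fin (n + 1) ⊕ Fin (n + 1)}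
    (hs : s.elim id id = Fin.last n) :
    IsDominatedBy (paraSq (n + 1)) (T.map (paraSqEmbedding n).toEmbedding) (.inr s) ↔
      .inl (Fin.last n) ∈ T := by
  constructor
  · rintro (hmem | ⟨v, hv, hadj⟩)
    · obtain ⟨p, -, hp⟩ := Finset.mem_map.1 hmem
      exact absurd hp (paraSqEmbedding_ne_inr_last p hs)
    · obtain ⟨p, hp, rfl⟩ := Finset.mem_map.1 hv
      rw [paraSq_adj_inr_iff, hs, Fin.succ_last] at hadj
      rcases hadj with hx | hz
      · rwa [← (paraSqEmbedding n).toEmbedding.injective (a₂ := .inl (Fin.last n)) hx]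
      · exact absurd hz (paraSqEmbedding_ne_inl_last p)
  · intro hx
    refine .inr ⟨_, Finset.mem_map_of_mem _ hx, (paraSq_adj_inr_iff _ _).2 (.inl ?_)⟩
    rw [hs]
    rfl

lemma isIndepDomSetExcept_map_iff :
    IsIndepDomSetExcept (paraSq (n + 1)) (T.map (paraSqEmbedding n).toEmbedding)
        (.inl (Fin.last (n + 1))) ↔
      IsIndepDomSet (paraSq n) T ∧ .inl (Fin.last n) ∈ T := by
  simp only [IsIndepDomSetExcept, ← not_isDominatedBy_iff, isIndepDomSet_iff,
    Embedding.forall_mem_map_not_adj_iff]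
  rw [forall_paraSq_succ]
  simp only [not_isDominatedBy_map_inl_last, Embedding.isDominatedBy_map_iff,
    isDominatedBy_map_inr_last_iff T (s := .inl (Fin.last n)) rfl,
    isDominatedBy_map_inr_last_iff T (s := .inr (Fin.last n)) rfl, paraSqEmbedding_ne_inl_last,
    reduceCtorEq, not_false_eq_true, iff_false, not_not, true_and]
  tauto

lemma exists_map_eq_of_isIndepDomSetExcept
    {S : Finset (Fin (n + 2) ⊕ (Fin (n + 1) ⊕ Fin (n + 1)))}
    (hS : IsIndepDomSetExcept (paraSq (n + 1)) S (.inl (Fin.last (n + 1)))) :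
    ∃ T : Finset (Fin (n + 1) ⊕ (Fin n ⊕ Fin n)),
      T.map (paraSqEmbedding n).toEmbedding = S := by
  obtain ⟨hz, hz_nbrs⟩ := (hS.2 _).2 rfl
  have hrange : ∀ v, v ∈ S → ∃ p, paraSqEmbedding n p = v := forall_paraSq_succ.2
    ⟨fun h => absurd h hz,
      fun h => (hz_nbrs _ h ((paraSq_adj_inl_last_iff _).2 (.inl rfl))).elim,
      fun h => (hz_nbrs _ h ((paraSq_adj_inl_last_iff _).2 (.inr rfl))).elim,
      fun p _ => ⟨p, rfl⟩⟩
  obtain ⟨T, -, hT⟩ := Finset.subset_map_iff.1 fun v hv =>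
    Finset.mem_map.2 <| (hrange v hv).imp fun p hp => ⟨Finset.mem_univ p, hp⟩
  exact ⟨T, hT.symm⟩

end ParaSq

theorem numAlmostIDSParaSq_general (n : ℕ) :
    Nat.card {S : Finset (Fin (n + 2) ⊕ (Fin (n + 1) ⊕ Fin (n + 1))) //
        (∀ v ∈ S, ∀ w ∈ S, ¬ (paraSq (n + 1)).Adj v w) ∧
        ∀ v, (v ∉ S ∧ ∀ w ∈ S, ¬ (paraSq (n + 1)).Adj v w) ↔
          v = Sum.inl (Fin.last (n + 1))} =
      Nat.card {S : Finset (Fin (n + 1) ⊕ (Fin n ⊕ Fin n)) //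
        IsIndepDomSet (paraSq n) S ∧ Sum.inl (Fin.last n) ∈ S} :=
  calc _ = Nat.card {T // IsIndepDomSetExcept (paraSq (n + 1))
          (T.map (paraSqEmbedding n).toEmbedding) (.inl (Fin.last (n + 1)))} :=
        Nat.card_subtype_eq_of_injective (Finset.map_injective _)
          fun _ => exists_map_eq_of_isIndepDomSetExcept
    _ = _ := Nat.card_congr (Equiv.subtypeEquivRight isIndepDomSetExcept_map_iff)

/-- For every `n ≥ 2` (here written with `n + 1`, `n ≥ 1`): the number of
independent sets `S` of `Q (n+1)` whose set of non-dominated vertices is exactly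
`{x (n+1)}` equals the number of independent dominating sets of `Q n` containing
the end cut vertex `x n`. -/
theorem numAlmostIDSParaSq (n : ℕ) (hn : 1 ≤ n) :
    Nat.card {S : Finset (Fin (n + 2) ⊕ (Fin (n + 1) ⊕ Fin (n + 1))) //
        (∀ v ∈ S, ∀ w ∈ S, ¬ (paraSq (n + 1)).Adj v w) ∧
        ∀ v, (v ∉ S ∧ ∀ w ∈ S, ¬ (paraSq (n + 1)).Adj v w) ↔
          v = Sum.inl (Fin.last (n + 1))} =
      Nat.card {S : Finset (Fin (n + 1) ⊕ (Fin n ⊕ Fin n)) //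
        IsIndepDomSet (paraSq n) S ∧ Sum.inl (Fin.last n) ∈ S} :=
  numAlmostIDSParaSq_general n
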